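/- Let N ≥ 1, let A_1, …, A_N be positive semidefinite complex matrices over a common finite index type, and let π¹, …, π^N be N permutations of {1,…,N} that are mutually orthogonal, i.e. π^k(i) ≠ π^l(i) for all i whenever k ≠ l. Then ‖∑_{i=1}^N A_i‖ ≤ ∑_{k=1}^N max_{1≤i≤N} ‖√(A_i)·√(A_{π^k(i)})‖. -/

import Mathlib

open Matrix ComplexOrder

set_option maxHeartbeats 400000

/-- The Schatten ∞-norm of a square complex matrix: the operator norm induced by the
Euclidean norm (the largest singular value). -/
noncomputable def opNorm {n : Type*} [Fintype n] [DecidableEq n] (M : Matrix n n ℂ) : ℝ :=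
  ‖Matrix.toEuclideanCLM (𝕜 := ℂ) M‖

/-- The positive semidefinite square root of a positive semidefinite matrix, as
`Matrix.PosSemidef.sqrt` was defined in the older Mathlib (it has since been removed). -/
noncomputable def Matrix.PosSemidef.sqrt {n : Type*} [Fintype n] [DecidableEq n] {A : Matrix n n ℂ}
    (hA : A.PosSemidef) : Matrix n n ℂ :=
  hA.1.eigenvectorUnitary.1 * diagonal ((↑) ∘ (√·) ∘ hA.1.eigenvalues) *
    (star hA.1.eigenvectorUnitary : Matrix n n ℂ)

lemma Matrix.PosSemidef.posSemidef_sqrt {n : Type*} [Fintype n] [DecidableEq n]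
    {A : Matrix n n ℂ} (hA : A.PosSemidef) : hA.sqrt.PosSemidef := by
  have hD : (diagonal ((↑) ∘ (√·) ∘ hA.1.eigenvalues) : Matrix n n ℂ).PosSemidef := by
    refine posSemidef_diagonal_iff.mpr fun i => ?_
    simp only [Function.comp_apply]
    exact Complex.zero_le_real.mpr (Real.sqrt_nonneg _)
  have := hD.mul_mul_conjTranspose_same (hA.1.eigenvectorUnitary : Matrix n n ℂ)
  unfold Matrix.PosSemidef.sqrt
  rw [star_eq_conjTranspose]
  exact this

lemma Matrix.PosSemidef.sqrt_mul_self {n : Type*} [Fintype n] [DecidableEq n]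
    {A : Matrix n n ℂ} (hA : A.PosSemidef) : hA.sqrt * hA.sqrt = A := by
  let C : Matrix n n ℂ := hA.1.eigenvectorUnitary
  let E := (diagonal ((↑) ∘ (√·) ∘ hA.1.eigenvalues) : Matrix n n ℂ)
  have hCC : (star hA.1.eigenvectorUnitary : Matrix n n ℂ) * C = 1 :=
    Unitary.coe_star_mul_self _
  have hEE : E * E = diagonal (RCLike.ofReal ∘ hA.1.eigenvalues) := by
    rw [diagonal_mul_diagonal]
    congr 1
    funext v
    simp only [Function.comp_apply]
    rw [← Complex.ofReal_mul, Real.mul_self_sqrt (hA.eigenvalues_nonneg v)]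
    rfl
  calc hA.sqrt * hA.sqrt = C * (E * ((star hA.1.eigenvectorUnitary : Matrix n n ℂ) * C) * E) *
        (star hA.1.eigenvectorUnitary : Matrix n n ℂ) := by
        simp only [Matrix.PosSemidef.sqrt, C, E, Matrix.mul_assoc]
    _ = A := by
        rw [hCC, Matrix.mul_one, hEE]
        have h := hA.1.spectral_theorem
        rw [Unitary.conjStarAlgAut_apply] at h
        exact h.symm

section aux

variable {ι : Type*} [Fintype ι] [DecidableEq ι]

lemma selfadj_of_psd {M : Matrix ι ι ℂ} (hM : M.PosSemidef) (x y : EuclideanSpace ℂ ι) :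
    (inner ℂ (Matrix.toEuclideanCLM (𝕜 := ℂ) M x) y : ℂ)
      = inner ℂ x (Matrix.toEuclideanCLM (𝕜 := ℂ) M y) := by
  have h1 : ContinuousLinearMap.adjoint (Matrix.toEuclideanCLM (𝕜 := ℂ) M)
      = Matrix.toEuclideanCLM (𝕜 := ℂ) M := by
    rw [← ContinuousLinearMap.star_eq_adjoint, ← map_star]
    congr 1
    exact hM.isHermitian
  conv_lhs => rw [← h1]
  exact ContinuousLinearMap.adjoint_inner_left _ y x

end aux

theorem stmt2 {ι : Type*} [Fintype ι] [DecidableEq ι] (N : ℕ) (hN : 1 ≤ N)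
    (A : Fin N → Matrix ι ι ℂ) (hA : ∀ i, (A i).PosSemidef)
    (π : Fin N → Equiv.Perm (Fin N))
    (hπ : ∀ k l : Fin N, k ≠ l → ∀ i : Fin N, π k i ≠ π l i) :
    opNorm (∑ i, A i) ≤
      ∑ k : Fin N,
        Finset.univ.sup' (Finset.univ_nonempty_iff.mpr (Fin.pos_iff_nonempty.mp hN))
          (fun i : Fin N => opNorm ((hA i).sqrt * (hA (π k i)).sqrt)) := by
  classical
  have hne : (Finset.univ : Finset (Fin N)).Nonempty :=
    Finset.univ_nonempty_iff.mpr (Fin.pos_iff_nonempty.mp hN)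
  set B : Fin N → Matrix ι ι ℂ := fun i => (hA i).sqrt with hB
  set T : Fin N → (EuclideanSpace ℂ ι →L[ℂ] EuclideanSpace ℂ ι) :=
    fun i => Matrix.toEuclideanCLM (𝕜 := ℂ) (B i) with hT
  set M : Fin N → ℝ := fun k =>
    Finset.univ.sup' hne (fun i : Fin N => opNorm (B i * B (π k i))) with hM
  set C : ℝ := ∑ k : Fin N, M k with hC
  have hMnonneg : ∀ k, 0 ≤ M k := by
    intro k
    obtain ⟨i, -⟩ := hne
    refine le_trans ?_
      (Finset.le_sup' (fun i => opNorm (B i * B (π k i))) (Finset.mem_univ i))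
    exact norm_nonneg _
  have hCnonneg : 0 ≤ C := Finset.sum_nonneg fun k _ => hMnonneg k
  -- key quadratic form bound
  have key : ∀ x : EuclideanSpace ℂ ι, ∑ i, ‖T i x‖ ^ 2 ≤ C * ‖x‖ ^ 2 := by
    intro x
    set u : Fin N → EuclideanSpace ℂ ι := fun i => T i x with hu
    set q : ℝ := ∑ i, ‖u i‖ ^ 2 with hq
    have hqnonneg : 0 ≤ q := Finset.sum_nonneg fun i _ => sq_nonneg _
    set w : EuclideanSpace ℂ ι := ∑ i, T i (u i) with hw
    have hq1 : q = RCLike.re (inner ℂ w x : ℂ) := by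
      rw [hw, sum_inner, map_sum]
      refine Finset.sum_congr rfl fun i _ => ?_
      rw [selfadj_of_psd (hA i).posSemidef_sqrt (u i) x]
      exact (inner_self_eq_norm_sq (𝕜 := ℂ) (u i)).symm
    -- ‖w‖^2 ≤ C * q
    have hwbound : ‖w‖ ^ 2 ≤ C * q := by
      have h1 : ‖w‖ ^ 2 = RCLike.re (inner ℂ w w : ℂ) :=
        (inner_self_eq_norm_sq (𝕜 := ℂ) w).symm
      rw [h1]
      conv_lhs => rw [hw, sum_inner, map_sum]
      have h2 : ∀ i : Fin N, RCLike.re (inner ℂ (T i (u i)) w : ℂ) ≤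
          ∑ j, ‖u i‖ * (opNorm (B i * B j) * ‖u j‖) := by
        intro i
        rw [hw, inner_sum, map_sum]
        refine Finset.sum_le_sum fun j _ => ?_
        calc RCLike.re (inner ℂ (T i (u i)) (T j (u j)) : ℂ)
            = RCLike.re (inner ℂ (u i) (T i (T j (u j))) : ℂ) := by
              rw [selfadj_of_psd (hA i).posSemidef_sqrt]
          _ ≤ ‖(inner ℂ (u i) (T i (T j (u j))) : ℂ)‖ := RCLike.re_le_norm _
          _ ≤ ‖u i‖ * ‖T i (T j (u j))‖ := norm_inner_le_norm _ _
          _ ≤ ‖u i‖ * (opNorm (B i * B j) * ‖u j‖) := by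
              refine mul_le_mul_of_nonneg_left ?_ (norm_nonneg _)
              have heq : T i (T j (u j)) =
                  (Matrix.toEuclideanCLM (𝕜 := ℂ) (B i * B j)) (u j) := by
                rw [_root_.map_mul, ContinuousLinearMap.mul_apply]
              rw [heq]
              exact ContinuousLinearMap.le_opNorm _ _
      calc ∑ i, RCLike.re (inner ℂ (T i (u i)) w : ℂ)
          ≤ ∑ i, ∑ j, ‖u i‖ * (opNorm (B i * B j) * ‖u j‖) :=
            Finset.sum_le_sum fun i _ => h2 i
        _ = ∑ i, ∑ k : Fin N, ‖u i‖ * (opNorm (B i * B (π k i)) * ‖u (π k i)‖) := by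
            refine Finset.sum_congr rfl fun i _ => ?_
            have hbij : Function.Bijective (fun k : Fin N => π k i) := by
              refine Finite.injective_iff_bijective.mp fun k l h => ?_
              by_contra hne'
              exact hπ k l hne' i h
            exact (Fintype.sum_bijective _ hbij _ _ (fun k => rfl)).symm
        _ = ∑ k : Fin N, ∑ i, ‖u i‖ * (opNorm (B i * B (π k i)) * ‖u (π k i)‖) :=
            Finset.sum_comm
        _ ≤ ∑ k : Fin N, M k * q := by
            refine Finset.sum_le_sum fun k _ => ?_
            calc ∑ i, ‖u i‖ * (opNorm (B i * B (π k i)) * ‖u (π k i)‖)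
                ≤ ∑ i, M k * (‖u i‖ * ‖u (π k i)‖) := by
                  refine Finset.sum_le_sum fun i _ => ?_
                  have hle : opNorm (B i * B (π k i)) ≤ M k :=
                    Finset.le_sup' (fun i => opNorm (B i * B (π k i)))
                      (Finset.mem_univ i)
                  have h5 := mul_le_mul_of_nonneg_right hle
                    (mul_nonneg (norm_nonneg (u i)) (norm_nonneg (u (π k i))))
                  calc ‖u i‖ * (opNorm (B i * B (π k i)) * ‖u (π k i)‖)
                      = opNorm (B i * B (π k i)) * (‖u i‖ * ‖u (π k i)‖) := by ring
                    _ ≤ M k * (‖u i‖ * ‖u (π k i)‖) := h5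
              _ ≤ M k * q := by
                  rw [← Finset.mul_sum]
                  refine mul_le_mul_of_nonneg_left ?_ (hMnonneg k)
                  have hperm : ∑ i, ‖u (π k i)‖ ^ 2 = q := by
                    rw [hq]
                    exact Equiv.sum_comp (π k) (fun i => ‖u i‖ ^ 2)
                  calc ∑ i, ‖u i‖ * ‖u (π k i)‖
                      ≤ ∑ i, (‖u i‖ ^ 2 + ‖u (π k i)‖ ^ 2) / 2 := by
                        refine Finset.sum_le_sum fun i _ => ?_
                        nlinarith [sq_nonneg (‖u i‖ - ‖u (π k i)‖)]
                    _ = q := by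
                        rw [← Finset.sum_div, Finset.sum_add_distrib, hperm, ← hq]
                        ring
        _ = C * q := by rw [hC, Finset.sum_mul]
    -- combine: q^2 ≤ C * q * ‖x‖^2
    have hq2 : q ^ 2 ≤ C * q * ‖x‖ ^ 2 := by
      have h3 : q ≤ ‖w‖ * ‖x‖ := by
        rw [hq1]
        exact le_trans (RCLike.re_le_norm _) (norm_inner_le_norm _ _)
      have h4 : q ^ 2 ≤ (‖w‖ * ‖x‖) ^ 2 := pow_le_pow_left₀ hqnonneg h3 2
      calc q ^ 2 ≤ (‖w‖ * ‖x‖) ^ 2 := h4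
        _ = ‖w‖ ^ 2 * ‖x‖ ^ 2 := by ring
        _ ≤ C * q * ‖x‖ ^ 2 := mul_le_mul_of_nonneg_right hwbound (sq_nonneg _)
    have hgoal : q ≤ C * ‖x‖ ^ 2 := by
      rcases eq_or_lt_of_le hqnonneg with h0 | h0
      · rw [← h0]; positivity
      · have h6 : q * q ≤ (C * ‖x‖ ^ 2) * q := by nlinarith
        exact le_of_mul_le_mul_right h6 h0
    exact hgoal
  -- now conclude
  have hS : (∑ i, A i).PosSemidef :=
    Finset.sum_induction A Matrix.PosSemidef (fun a b ha hb => ha.add hb)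
      Matrix.PosSemidef.zero (fun i _ => hA i)
  set R : Matrix ι ι ℂ := hS.sqrt with hR
  set TR : EuclideanSpace ℂ ι →L[ℂ] EuclideanSpace ℂ ι :=
    Matrix.toEuclideanCLM (𝕜 := ℂ) R with hTR
  have hTRbound : ∀ x : EuclideanSpace ℂ ι, ‖TR x‖ ≤ Real.sqrt C * ‖x‖ := by
    intro x
    have h1 : ‖TR x‖ ^ 2
        = RCLike.re (inner ℂ x (Matrix.toEuclideanCLM (𝕜 := ℂ) (∑ i, A i) x) : ℂ) := by
      rw [← inner_self_eq_norm_sq (𝕜 := ℂ) (TR x), selfadj_of_psd hS.posSemidef_sqrt]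
      congr 2
      have heq : TR (TR x) = Matrix.toEuclideanCLM (𝕜 := ℂ) (R * R) x := by
        rw [_root_.map_mul, ContinuousLinearMap.mul_apply]
      rw [heq, hR, hS.sqrt_mul_self]
    have h2 : RCLike.re (inner ℂ x (Matrix.toEuclideanCLM (𝕜 := ℂ) (∑ i, A i) x) : ℂ)
        = ∑ i, ‖T i x‖ ^ 2 := by
      rw [_root_.map_sum, ContinuousLinearMap.sum_apply, inner_sum, map_sum]
      refine Finset.sum_congr rfl fun i _ => ?_
      have h3 : Matrix.toEuclideanCLM (𝕜 := ℂ) (A i) x = T i (T i x) := by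
        rw [hT]
        have hAi : (A i) = B i * B i := ((hA i).sqrt_mul_self).symm
        rw [hAi, _root_.map_mul, ContinuousLinearMap.mul_apply]
      rw [h3, ← selfadj_of_psd (hA i).posSemidef_sqrt]
      exact inner_self_eq_norm_sq (𝕜 := ℂ) (T i x)
    have h4 : ‖TR x‖ ^ 2 ≤ (Real.sqrt C * ‖x‖) ^ 2 := by
      rw [h1, h2]
      calc ∑ i, ‖T i x‖ ^ 2 ≤ C * ‖x‖ ^ 2 := key x
        _ = (Real.sqrt C * ‖x‖) ^ 2 := by rw [mul_pow, Real.sq_sqrt hCnonneg]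
    calc ‖TR x‖ = Real.sqrt (‖TR x‖ ^ 2) := (Real.sqrt_sq (norm_nonneg _)).symm
      _ ≤ Real.sqrt ((Real.sqrt C * ‖x‖) ^ 2) := Real.sqrt_le_sqrt h4
      _ = Real.sqrt C * ‖x‖ := Real.sqrt_sq (by positivity)
  have hTRnorm : ‖TR‖ ≤ Real.sqrt C :=
    ContinuousLinearMap.opNorm_le_bound _ (Real.sqrt_nonneg _) hTRbound
  have hfinal : opNorm (∑ i, A i) ≤ C := by
    have heq : Matrix.toEuclideanCLM (𝕜 := ℂ) (∑ i, A i) = TR * TR := by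
      rw [hTR, ← _root_.map_mul, hR, hS.sqrt_mul_self]
    rw [opNorm, heq]
    calc ‖TR * TR‖ ≤ ‖TR‖ * ‖TR‖ := norm_mul_le _ _
      _ ≤ Real.sqrt C * Real.sqrt C := by
          exact mul_le_mul hTRnorm hTRnorm (norm_nonneg _) (Real.sqrt_nonneg _)
      _ = C := Real.mul_self_sqrt hCnonneg
  exact hfinal
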